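/- arXiv:math/0211216 — 4 statements merged into one kernel-verified Lean document; each statement's English description precedes it below -/
import Mathlib

section
/- Let f(x) = ∑_{n ≥ 0} x^{2^n − 1} ∈ ℤ[[x]]. Then f(x) ≡ f(−x) · (1 + 2x·f(x)) modulo 4ℤ[[x]], i.e. every coefficient of f(x) − f(−x)(1 + 2x f(x)) is divisible by 4. -/
/-!
Write `g(x) = f(-x)` and `h(x) = f(x²)`. The functional equation `f = 1 + x h` gives
`g = 1 - x h`, hence `f - g = 2x h` and `f - g (1 + 2x f) = 2x (h - g f)`. Modulo 2 we have
`g ≡ f` and, by the Frobenius endomorphism of `𝔽₂[[x]]`, `h ≡ f²`; so `h - g f` is even and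
the whole expression is divisible by 4.
-/

/-- `f(x) = ∑_{n ≥ 0} x^(2^n - 1) ∈ ℤ[[x]]`. -/
noncomputable def fSeries : PowerSeries ℤ := by
  classical
  exact PowerSeries.mk fun m => if ∃ n : ℕ, m + 1 = 2 ^ n then 1 else 0

namespace PowerSeries

theorem rescale_expand {R : Type*} [CommRing R] (p : ℕ) (hp : p ≠ 0) (a : R) (φ : R⟦X⟧) :
    rescale a (expand p hp φ) = expand p hp (rescale (a ^ p) φ) := by
  ext n
  simp only [coeff_rescale, coeff_expand]
  split_ifs with h
  · obtain ⟨k, rfl⟩ := h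
    rw [Nat.mul_div_cancel_left _ (Nat.pos_of_ne_zero hp), pow_mul]
  · rw [mul_zero]

theorem expand_zmod_eq_pow (p : ℕ) [Fact p.Prime] (φ : (ZMod p)⟦X⟧) :
    expand p (Fact.out : p.Prime).ne_zero φ = φ ^ p := by
  have h := MvPowerSeries.map_frobenius_expand p (Fact.out : p.Prime).ne_zero (f := φ)
  rwa [ZMod.frobenius_zmod, MvPowerSeries.map_id] at h

theorem natCast_dvd_of_map_zmod_eq_zero {n : ℕ} {φ : ℤ⟦X⟧}
    (h : map (Int.castRingHom (ZMod n)) φ = 0) : (n : ℤ⟦X⟧) ∣ φ := by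
  have hdvd (k : ℕ) : (n : ℤ) ∣ coeff k φ := by
    rw [← ZMod.intCast_zmod_eq_zero_iff_dvd, ← eq_intCast (Int.castRingHom (ZMod n)),
      ← coeff_map, h, map_zero]
  refine ⟨mk fun k => coeff k φ / n, ?_⟩
  ext k
  rw [← map_natCast C, coeff_C_mul, coeff_mk, Int.mul_ediv_cancel' (hdvd k)]

end PowerSeries

namespace Nat

theorem exists_two_mul_add_two_eq_two_pow_iff (m : ℕ) :
    (∃ n, 2 * m + 2 = 2 ^ n) ↔ ∃ n, m + 1 = 2 ^ n := by
  constructor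
  · rintro ⟨_ | n, hn⟩
    · omega
    · exact ⟨n, by rw [pow_succ] at hn; omega⟩
  · rintro ⟨n, hn⟩
    exact ⟨n + 1, by rw [pow_succ]; omega⟩

theorem two_mul_add_three_ne_two_pow (m n : ℕ) : 2 * m + 3 ≠ 2 ^ n := by
  rcases n with _ | n
  · omega
  · rw [pow_succ]; omega

end Nat

open PowerSeries

open scoped Classical in
theorem coeff_fSeries (m : ℕ) :
    coeff m fSeries = if ∃ n : ℕ, m + 1 = 2 ^ n then 1 else 0 := by
  simp [fSeries]

theorem fSeries_eq_one_add_X_mul_expand :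
    fSeries = 1 + X * expand 2 two_ne_zero fSeries := by
  ext (_ | k)
  · simpa [coeff_fSeries] using ⟨0, rfl⟩
  rw [map_add, coeff_succ_X_mul, coeff_one, if_neg k.succ_ne_zero, zero_add]
  obtain ⟨j, rfl | rfl⟩ := k.even_or_odd'
  · rw [coeff_expand_mul, coeff_fSeries, coeff_fSeries, Nat.exists_two_mul_add_two_eq_two_pow_iff]
  · rw [coeff_expand_of_not_dvd _ _ _ (by omega), coeff_fSeries,
      if_neg fun ⟨n, hn⟩ => Nat.two_mul_add_three_ne_two_pow j n hn]

theorem fSeries_sub_rescale_neg_one :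
    fSeries - rescale (-1) fSeries = 2 * X * expand 2 two_ne_zero fSeries := by
  have h := congrArg (rescale (-1 : ℤ)) fSeries_eq_one_add_X_mul_expand
  rw [map_add, map_mul, map_one, rescale_X, map_neg, map_one, rescale_expand, neg_one_sq,
    rescale_one, RingHom.id_apply] at h
  linear_combination fSeries_eq_one_add_X_mul_expand - h

theorem two_dvd_expand_sub_rescale_mul :
    (2 : ℤ⟦X⟧) ∣ expand 2 two_ne_zero fSeries - rescale (-1) fSeries * fSeries := by
  have hmod := congrArg (map (Int.castRingHom (ZMod 2))) fSeries_sub_rescale_neg_one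
  have two_eq_zero : (2 : (ZMod 2)⟦X⟧) = 0 := by
    rw [← map_ofNat C 2, show (2 : ZMod 2) = 0 from rfl, map_zero]
  rw [map_sub, map_mul, map_mul, map_ofNat, two_eq_zero, zero_mul, zero_mul, sub_eq_zero] at hmod
  apply natCast_dvd_of_map_zmod_eq_zero
  rw [map_sub, map_mul, map_expand, expand_zmod_eq_pow, ← hmod, sq, sub_self]

/-- `f(x) ≡ f(-x)·(1 + 2x·f(x))` modulo `4ℤ[[x]]`: every coefficient of
`f(x) - f(-x)(1 + 2x f(x))` is divisible by `4`. -/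
theorem statement8 (m : ℕ) :
    (4 : ℤ) ∣ PowerSeries.coeff (R := ℤ) m
      (fSeries - PowerSeries.rescale (-1 : ℤ) fSeries
        * (1 + 2 * PowerSeries.X * fSeries)) := by
  obtain ⟨q, hq⟩ := two_dvd_expand_sub_rescale_mul
  have h : fSeries - rescale (-1) fSeries * (1 + 2 * X * fSeries) = C 4 * (X * q) := by
    rw [map_ofNat]
    linear_combination fSeries_sub_rescale_neg_one + 2 * X * hq
  rw [h, coeff_C_mul]
  exact dvd_mul_right _ _
end

section
/- Let f(x) = ∑_{n ≥ 0} x^{2^n − 1} ∈ ℤ[[x]] and e(x) = 1 + 2x·f(x) = 1 + 2∑_{n ≥ 0} x^{2^n}. Then e(x+y) ≡ e(x)·e(y) modulo 4ℤ[[x,y]]. -/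
/-!
Write `e(x) = 1 + 2u`, `e(y) = 1 + 2v` and `e(x+y) = 1 + 2w` with `u = ∑ x^(2^n)`,
`v = ∑ y^(2^n)` and `w = ∑ (x+y)^(2^n)`. Then `e(x+y) - e(x)e(y) = 2(w - u - v) - 4uv`, so it
suffices that `w ≡ u + v` mod `2`, i.e. the Frobenius congruence
`(x+y)^(2^n) ≡ x^(2^n) + y^(2^n)`: `C(2^n, i)` is even for `0 < i < 2^n`.
-/

/-- `e(x) = 1 + 2∑_{n ≥ 0} x^(2^n)` as a power series in the two variables `x, y`
(the variable `y = X 1` does not occur). -/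
noncomputable def eX : MvPowerSeries (Fin 2) ℤ := by
  classical
  exact fun d => if d 1 = 0 ∧ ∃ n : ℕ, d 0 = 2 ^ n then 2 else if d = 0 then 1 else 0

/-- `e(y) = 1 + 2∑_{n ≥ 0} y^(2^n)` as a power series in the two variables `x, y`. -/
noncomputable def eY : MvPowerSeries (Fin 2) ℤ := by
  classical
  exact fun d => if d 0 = 0 ∧ ∃ n : ℕ, d 1 = 2 ^ n then 2 else if d = 0 then 1 else 0

/-- `e(x+y) = 1 + 2∑_{n ≥ 0} (x+y)^(2^n)`: by the binomial theorem, the coefficient of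
`x^i y^j` (for `(i,j) ≠ (0,0)`) is `2·C(i+j, i)` if `i + j` is a power of `2`, and `0`
otherwise. -/
noncomputable def eXY : MvPowerSeries (Fin 2) ℤ := by
  classical
  exact fun d =>
    if d = 0 then 1
    else if ∃ n : ℕ, d 0 + d 1 = 2 ^ n then 2 * ((d 0 + d 1).choose (d 0) : ℤ) else 0

theorem Nat.choose_prime_pow_modEq {p : ℕ} (hp : p.Prime) (n i : ℕ) :
    (if i = p ^ n then 1 else 0) + (if i = 0 then 1 else 0) ≡ (p ^ n).choose i [MOD p] := by
  have hpn : p ^ n ≠ 0 := pow_ne_zero n hp.ne_zero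
  by_cases hi : i = p ^ n
  · rw [if_pos hi, if_neg (hi ▸ hpn), hi, Nat.choose_self]
  by_cases hi0 : i = 0
  · rw [if_neg hi, if_pos hi0, hi0, Nat.choose_zero_right]
  rw [if_neg hi, if_neg hi0]
  exact (Nat.modEq_zero_iff_dvd.2 (hp.dvd_choose_pow hi0 hi)).symm

theorem MvPowerSeries.four_dvd_coeff_sub_mul {σ : Type*} (u v w : MvPowerSeries σ ℤ)
    (d : σ →₀ ℕ) (h : (2 : ℤ) ∣ coeff d (w - u - v)) :
    (4 : ℤ) ∣ coeff d ((1 + 2 • w) - (1 + 2 • u) * (1 + 2 • v)) := by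
  have hexpand : (1 + 2 • w) - (1 + 2 • u) * (1 + 2 • v) = 2 • (w - u - v) - 4 • (u * v) := by
    simp only [nsmul_eq_mul]; ring
  rw [hexpand, map_sub, map_nsmul, map_nsmul, nsmul_eq_mul, nsmul_eq_mul]
  exact dvd_sub (by simpa using mul_dvd_mul_left 2 h) (dvd_mul_right _ _)

noncomputable def sumPowTwoX : MvPowerSeries (Fin 2) ℤ := by
  classical
  exact fun d => if d 1 = 0 ∧ ∃ n : ℕ, d 0 = 2 ^ n then 1 else 0

noncomputable def sumPowTwoY : MvPowerSeries (Fin 2) ℤ := by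
  classical
  exact fun d => if d 0 = 0 ∧ ∃ n : ℕ, d 1 = 2 ^ n then 1 else 0

/-- `∑_{n ≥ 0} (x+y)^(2^n)`, with coefficients given by the binomial theorem. -/
noncomputable def sumPowTwoAdd : MvPowerSeries (Fin 2) ℤ := by
  classical
  exact fun d =>
    if ∃ n : ℕ, d 0 + d 1 = 2 ^ n then ((d 0 + d 1).choose (d 0) : ℤ) else 0

theorem eX_eq : eX = 1 + 2 • sumPowTwoX := by
  ext d
  rw [map_add, map_nsmul, MvPowerSeries.coeff_one]
  simp only [MvPowerSeries.coeff_apply, eX, sumPowTwoX]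
  by_cases h0 : d = 0
  · simp [h0, eq_comm (a := 0)]
  · split_ifs <;> simp

theorem eY_eq : eY = 1 + 2 • sumPowTwoY := by
  ext d
  rw [map_add, map_nsmul, MvPowerSeries.coeff_one]
  simp only [MvPowerSeries.coeff_apply, eY, sumPowTwoY]
  by_cases h0 : d = 0
  · simp [h0, eq_comm (a := 0)]
  · split_ifs <;> simp

theorem eXY_eq : eXY = 1 + 2 • sumPowTwoAdd := by
  ext d
  rw [map_add, map_nsmul, MvPowerSeries.coeff_one]
  simp only [MvPowerSeries.coeff_apply, eXY, sumPowTwoAdd]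
  by_cases h0 : d = 0
  · simp [h0, eq_comm (a := 0)]
  · by_cases hpow : ∃ n : ℕ, d 0 + d 1 = 2 ^ n <;> simp [h0, hpow]

theorem two_dvd_coeff_sumPowTwoAdd_sub (d : Fin 2 →₀ ℕ) :
    (2 : ℤ) ∣ MvPowerSeries.coeff d (sumPowTwoAdd - sumPowTwoX - sumPowTwoY) := by
  simp only [map_sub, MvPowerSeries.coeff_apply, sumPowTwoAdd, sumPowTwoX, sumPowTwoY]
  by_cases hpow : ∃ n : ℕ, d 0 + d 1 = 2 ^ n
  · obtain ⟨n, hn⟩ := hpow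
    have hx : (d 1 = 0 ∧ ∃ m : ℕ, d 0 = 2 ^ m) ↔ d 0 = 2 ^ n :=
      ⟨fun h => by have := h.1; omega, fun h => ⟨by omega, n, h⟩⟩
    have hy : (d 0 = 0 ∧ ∃ m : ℕ, d 1 = 2 ^ m) ↔ d 0 = 0 :=
      ⟨And.left, fun h => ⟨h, n, by omega⟩⟩
    simp only [if_pos (⟨n, hn⟩ : ∃ m : ℕ, d 0 + d 1 = 2 ^ m), hn, hx, hy, sub_sub]
    exact_mod_cast Nat.modEq_iff_dvd.1 (Nat.choose_prime_pow_modEq Nat.prime_two n (d 0))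
  · rw [if_neg hpow, if_neg fun ⟨_, m, hm⟩ => hpow ⟨m, by omega⟩,
      if_neg fun ⟨_, m, hm⟩ => hpow ⟨m, by omega⟩]
    exact dvd_zero 2

/-- `e(x+y) ≡ e(x)·e(y)` modulo `4ℤ[[x,y]]`: every coefficient of
`e(x+y) - e(x)e(y)` is divisible by `4`. -/
theorem statement9 (d : Fin 2 →₀ ℕ) :
    (4 : ℤ) ∣ MvPowerSeries.coeff d (eXY - eX * eY) := by
  rw [eXY_eq, eX_eq, eY_eq]
  exact MvPowerSeries.four_dvd_coeff_sub_mul _ _ _ d (two_dvd_coeff_sumPowTwoAdd_sub d)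
end

section
/- The formal power series √(1 + 4x) ∈ ℚ[[x]] (the unique power series with constant term 1 whose square is 1 + 4x) has integer coefficients. -/
/-!
With `c(X) = ∑ Cₙ Xⁿ` the Catalan series, `c = 1 + X c²` gives `c(-X) + X c(-X)² = 1`, hence
`(1 + 2X c(-X))² = 1 + 4X`: this exhibits a square root of `1 + 4X` with integer coefficients.
Over a ring without zero divisors in which `2 ≠ 0`, a square root with nonzero constant term is
determined by that constant term, since `f² = g²` forces `f = ±g`.
-/

open PowerSeries

namespace PowerSeries

theorem eq_of_sq_eq_of_constantCoeff_eq {R : Type*} [CommRing R] [NoZeroDivisors R]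
    [NeZero (2 : R)] {f g : R⟦X⟧} (hsq : f ^ 2 = g ^ 2) (hc : constantCoeff f = constantCoeff g)
    (hg : constantCoeff g ≠ 0) : f = g := by
  refine (sq_eq_sq_iff_eq_or_eq_neg.mp hsq).resolve_right fun hneg => hg ?_
  subst hneg
  rw [map_neg] at hc
  have h2 : (2 : R) * constantCoeff g = 0 := by linear_combination -hc
  exact (mul_eq_zero.mp h2).resolve_left two_ne_zero

noncomputable def catalanSeriesNeg : ℤ⟦X⟧ :=
  rescale (-1) (map (Nat.castRingHom ℤ) catalanSeries)

theorem catalanSeriesNeg_add_X_mul_sq : catalanSeriesNeg + X * catalanSeriesNeg ^ 2 = 1 := by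
  have h := congrArg (fun f => rescale (-1 : ℤ) (map (Nat.castRingHom ℤ) f))
    catalanSeries_sq_mul_X_add_one
  simp only [map_add, map_mul, map_pow, map_X, map_one, rescale_neg_one_X] at h
  rw [catalanSeriesNeg]
  linear_combination -h

noncomputable def sqrtOneAddFourX : ℤ⟦X⟧ := 1 + 2 * X * catalanSeriesNeg

theorem sqrtOneAddFourX_sq : sqrtOneAddFourX ^ 2 = 1 + 4 * X := by
  rw [sqrtOneAddFourX]
  linear_combination (4 * X : ℤ⟦X⟧) * catalanSeriesNeg_add_X_mul_sq

theorem constantCoeff_sqrtOneAddFourX : constantCoeff sqrtOneAddFourX = 1 := by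
  simp [sqrtOneAddFourX]

end PowerSeries

/-- The formal power series `√(1 + 4x) ∈ ℚ[[x]]` — the unique power series
with constant term `1` whose square is `1 + 4x` — has integer coefficients. -/
theorem statement11 (g : PowerSeries ℚ)
    (hg1 : PowerSeries.constantCoeff g = 1)
    (hg2 : g ^ 2 = 1 + 4 * PowerSeries.X) :
    ∀ m : ℕ, ∃ n : ℤ, PowerSeries.coeff m g = (n : ℚ) := by
  have hc : constantCoeff (map (Int.castRingHom ℚ) sqrtOneAddFourX) = 1 := by
    rw [← coeff_zero_eq_constantCoeff_apply, coeff_map, coeff_zero_eq_constantCoeff_apply,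
      constantCoeff_sqrtOneAddFourX, map_one]
  have hg : g = map (Int.castRingHom ℚ) sqrtOneAddFourX := by
    refine eq_of_sq_eq_of_constantCoeff_eq ?_ (hg1.trans hc.symm) (hc ▸ one_ne_zero)
    rw [← map_pow, sqrtOneAddFourX_sq, hg2, map_add, map_one, map_mul, map_X, map_ofNat]
  intro m
  exact ⟨coeff m sqrtOneAddFourX, by rw [hg, coeff_map]; rfl⟩
end

section
/- In the ring R = (ℤ/2)[[α]][ε]/(ε²), with f(t) = ∑_{n ≥ 0} t^{2^n − 1}, one has f(α + ε) = f(α) + ε · f(α)². Consequently f(α+ε)/((1+ε)·f(α)) = 1 + ε·∑_{n ≥ 1} α^{2^n − 1}. -/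
open PowerSeries DualNumber

/-- The ring `R = (ℤ/2)[[α]][ε]/(ε²)`, realized as power series in `α` over the dual
numbers `(ℤ/2)[ε]`. -/
abbrev Rring : Type := PowerSeries (DualNumber (ZMod 2))

/-- `f(α) = ∑_{n ≥ 0} α^(2^n - 1)` in `R`. -/
noncomputable def fAlpha : Rring := by
  classical
  exact PowerSeries.mk fun m => if ∃ n : ℕ, m + 1 = 2 ^ n then 1 else 0

/-- `∑_{n ≥ 1} α^(2^n - 1)` in `R`. -/
noncomputable def fAlphaTail : Rring := by
  classical
  exact PowerSeries.mk fun m => if ∃ n : ℕ, m + 1 = 2 ^ (n + 1) then 1 else 0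

/-!
Since `ε² = 0`, `(α + ε)^(2k+1) = α^(2k+1) + (2k+1) α^(2k) ε`, and in characteristic `2` this is
`α^(2k+1) + ε (α^k)²`. As `2^(n+1) - 1 = 2 (2^n - 1) + 1` and squaring is additive, the partial
sums of `f(α + ε)` are `f_{N+1}(α) + ε f_N(α)²`, where `f_N` is the `N`-th partial sum of `f`;
since `f_N ≡ f` modulo `α^N`, the coefficients of `f(α + ε)` are those of `f + ε f²`. The second
identity is then ring arithmetic from `ε² = 0` and `f = 1 + ∑_{n ≥ 1} α^(2^n - 1)`.
-/

open Finset

section SquareZero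

variable {R : Type*} [CommRing R] {x e : R}

theorem add_pow_succ_of_mul_self_eq_zero (he : e * e = 0) (m : ℕ) :
    (x + e) ^ (m + 1) = x ^ (m + 1) + (m + 1) * x ^ m * e := by
  induction m with
  | zero => simp
  | succ m ih =>
    rw [pow_succ, ih]
    push_cast
    linear_combination (m + 1 : R) * x ^ m * he

variable [CharP R 2]

theorem add_pow_two_mul_add_one_of_mul_self_eq_zero (he : e * e = 0) (k : ℕ) :
    (x + e) ^ (2 * k + 1) = x ^ (2 * k + 1) + e * (x ^ k) ^ 2 := by
  rw [add_pow_succ_of_mul_self_eq_zero he, ← pow_mul, mul_comm k 2]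
  push_cast
  linear_combination (k * x ^ (2 * k) * e) * CharTwo.two_eq_zero (R := R)

theorem sum_add_pow_two_pow_sub_one_of_mul_self_eq_zero (he : e * e = 0) (N : ℕ) :
    ∑ n ∈ range (N + 1), (x + e) ^ (2 ^ n - 1)
      = ∑ n ∈ range (N + 1), x ^ (2 ^ n - 1) + e * (∑ n ∈ range N, x ^ (2 ^ n - 1)) ^ 2 := by
  have hexp (n : ℕ) : 2 ^ (n + 1) - 1 = 2 * (2 ^ n - 1) + 1 := by
    have := Nat.one_le_two_pow (n := n)
    rw [pow_succ]
    omega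
  simp only [sum_range_succ', sum_pow_char, mul_sum, hexp,
    add_pow_two_mul_add_one_of_mul_self_eq_zero he, sum_add_distrib, pow_zero, Nat.sub_self]
  ring

end SquareZero

theorem coeff_sum_X_pow {R : Type*} [Semiring R] (s : Finset ℕ) (m : ℕ) :
    coeff m (∑ j ∈ s, X ^ j : R⟦X⟧) = if m ∈ s then 1 else 0 := by
  simp [coeff_X_pow]

theorem two_pow_sub_one_injective : Function.Injective fun n : ℕ => 2 ^ n - 1 := by
  intro a b h
  have := Nat.one_le_two_pow (n := a)
  have := Nat.one_le_two_pow (n := b)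
  refine Nat.pow_right_injective le_rfl ?_
  simp only at h ⊢
  omega

instance : CharP Rring 2 := charP_of_injective_algebraMap' (ZMod 2) 2

theorem X_pow_dvd_fAlpha_sub (N : ℕ) :
    X ^ N ∣ fAlpha - ∑ n ∈ range N, X ^ (2 ^ n - 1) := by
  rw [← sum_image fun a _ b _ h => two_pow_sub_one_injective h, X_pow_dvd_iff]
  intro m hm
  rw [map_sub, coeff_sum_X_pow, fAlpha, coeff_mk, sub_eq_zero]
  congr 1
  simp only [mem_image, mem_range, eq_iff_iff]
  constructor
  · rintro ⟨n, hn⟩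
    have := Nat.lt_two_pow_self (n := n)
    exact ⟨n, by omega, by omega⟩
  · rintro ⟨n, -, rfl⟩
    exact ⟨n, Nat.sub_add_cancel Nat.one_le_two_pow⟩

theorem X_pow_dvd_fAlpha_add_mul_sq_sub {e : Rring} (he : e * e = 0) (N : ℕ) :
    X ^ N ∣ fAlpha + e * fAlpha ^ 2 - ∑ n ∈ range (N + 1), (X + e) ^ (2 ^ n - 1) := by
  rw [sum_add_pow_two_pow_sub_one_of_mul_self_eq_zero he]
  set P := ∑ n ∈ range N, (X : Rring) ^ (2 ^ n - 1)
  have hsplit : fAlpha + e * fAlpha ^ 2 - (∑ n ∈ range (N + 1), X ^ (2 ^ n - 1) + e * P ^ 2)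
      = (fAlpha - ∑ n ∈ range (N + 1), X ^ (2 ^ n - 1)) + e * (fAlpha + P) * (fAlpha - P) := by
    ring
  rw [hsplit]
  exact dvd_add ((pow_dvd_pow X N.le_succ).trans (X_pow_dvd_fAlpha_sub (N + 1)))
    (dvd_mul_of_dvd_right (X_pow_dvd_fAlpha_sub N) _)

theorem fAlpha_eq_one_add_fAlphaTail : fAlpha = 1 + fAlphaTail := by
  refine PowerSeries.ext fun m => ?_
  have hdisj : ¬ (m = 0 ∧ ∃ n, m + 1 = 2 ^ (n + 1)) := by
    rintro ⟨rfl, n, hn⟩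
    have := Nat.one_lt_two_pow_iff.mpr n.succ_ne_zero
    omega
  simp only [fAlpha, fAlphaTail, map_add, coeff_mk, coeff_one]
  rw [← Nat.or_exists_add_one, pow_zero, Nat.add_eq_right]
  split_ifs <;> simp_all

/-- In `R = (ℤ/2)[[α]][ε]/(ε²)`, with `f(t) = ∑_{n ≥ 0} t^(2^n - 1)`, one
has `f(α + ε) = f(α) + ε·f(α)²`, and consequently
`f(α+ε)/((1+ε)·f(α)) = 1 + ε·∑_{n ≥ 1} α^(2^n - 1)`.  Here `F = f(α + ε)` is the infinite
sum `∑_{n ≥ 0} (α + ε)^(2^n - 1)`, characterized by the fact that each of its coefficients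
is the (eventually constant) limit of the coefficients of the partial sums. -/
theorem statement13 (F : Rring)
    (hF : ∀ m : ℕ, ∃ N₀ : ℕ, ∀ N ≥ N₀,
      PowerSeries.coeff m F
        = PowerSeries.coeff m
            (∑ n ∈ Finset.range N,
              (PowerSeries.X + PowerSeries.C (DualNumber.eps : DualNumber (ZMod 2)))
                ^ (2 ^ n - 1))) :
    F = fAlpha + PowerSeries.C (DualNumber.eps : DualNumber (ZMod 2)) * fAlpha ^ 2 ∧
    F = (1 + PowerSeries.C (DualNumber.eps : DualNumber (ZMod 2))) * fAlpha
          * (1 + PowerSeries.C (DualNumber.eps : DualNumber (ZMod 2)) * fAlphaTail) := by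
  have he : C eps * C eps = (0 : Rring) := by rw [← map_mul, eps_mul_eps, map_zero]
  have hF_eq : F = fAlpha + C eps * fAlpha ^ 2 := by
    refine PowerSeries.ext fun m => ?_
    obtain ⟨N₀, hN⟩ := hF m
    rw [hN (max N₀ (m + 1) + 1) (by omega), eq_comm, ← sub_eq_zero, ← map_sub]
    exact X_pow_dvd_iff.mp (X_pow_dvd_fAlpha_add_mul_sq_sub he _) m (by omega)
  refine ⟨hF_eq, ?_⟩
  rw [hF_eq, fAlpha_eq_one_add_fAlphaTail]
  linear_combination (-(fAlphaTail * (1 + fAlphaTail))) * he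
end
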